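/- Assume (α, β) ≠ (α', β'). Then the eigenspace of X = P + iQ for the eigenvalue α + iβ equals the intersection of the eigenspaces of P and Q: ker(X − (α + iβ)·I) = ker(P − α·I) ∩ ker(Q − β·I) as subspaces of ℂⁿ. -/

import Mathlib

/-!
Write `A = P - α` and `B = Q - β`, so that `X - (α + iβ) = A + iB`, and let `(A + iB) v = 0`.
Then `u = A v` satisfies `B v = i u`, and the quadratic relations `A² = (α' - α) A`,
`B² = (β' - β) B` make `u` a common eigenvector of `A` and `B` with real eigenvalues `a`, `b`.
Moving `A` and `B` across the inner product gives `‖u‖² = a ⟨u, v⟩` and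
`i ‖u‖² = b ⟨u, v⟩`, hence `(b - i a) ‖u‖² = 0`; as `b - i a = 0` forces `a = 0`, in every
case `u = 0`, and then also `B v = i u = 0`.
-/

open Matrix

open scoped ComplexOrder

namespace Matrix

variable {n : Type*}

lemma IsHermitian.star_dotProduct_mulVec [Fintype n] {R : Type*} [CommSemiring R] [StarRing R]
    {A : Matrix n n R} (hA : A.IsHermitian) (x y : n → R) :
    star x ⬝ᵥ (A *ᵥ y) = star (A *ᵥ x) ⬝ᵥ y := by
  rw [star_mulVec, hA.eq, dotProduct_mulVec]

lemma IsHermitian.sub_ofReal_smul_one [DecidableEq n] {P : Matrix n n ℂ} (hP : P.IsHermitian)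
    (a : ℝ) : (P - (a : ℂ) • 1).IsHermitian :=
  hP.sub (isHermitian_one.smul (Complex.conj_ofReal a))

lemma sub_smul_one_mul_self_of_mul_eq_zero [Fintype n] [DecidableEq n] {R : Type*}
    [CommRing R] {P : Matrix n n R} {a a' : R} (h : (P - a • 1) * (P - a' • 1) = 0) :
    (P - a • 1) * (P - a • 1) = (a' - a) • (P - a • 1) := by
  have hsplit : P - a • 1 = (P - a' • 1) + (a' - a) • 1 := by module
  nth_rewrite 2 [hsplit]
  rw [mul_add, h, zero_add, mul_smul_comm, mul_one]

lemma eq_zero_of_mulVec_eq_of_mulVec_eq_I_smul [Fintype n] {A B : Matrix n n ℂ}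
    (hA : A.IsHermitian) (hB : B.IsHermitian) {a b : ℝ} {u v : n → ℂ}
    (hAu : A *ᵥ u = (a : ℂ) • u) (hBu : B *ᵥ u = (b : ℂ) • u)
    (hAv : A *ᵥ v = u) (hBv : B *ᵥ v = Complex.I • u) : u = 0 := by
  have hs : star u ⬝ᵥ u = a * (star u ⬝ᵥ v) := by
    rw [← hAv, hA.star_dotProduct_mulVec, hAv, hAu, star_smul, smul_dotProduct,
      Complex.star_def, Complex.conj_ofReal, smul_eq_mul]
  have hIs : Complex.I * (star u ⬝ᵥ u) = b * (star u ⬝ᵥ v) := by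
    rw [← smul_eq_mul, ← dotProduct_smul, ← hBv, hB.star_dotProduct_mulVec, hBu, star_smul,
      smul_dotProduct, Complex.star_def, Complex.conj_ofReal, smul_eq_mul]
  have hcomb : ((b : ℂ) - a * Complex.I) * (star u ⬝ᵥ u) = 0 := by
    linear_combination b * hs - a * hIs
  rw [← dotProduct_star_self_eq_zero]
  rcases mul_eq_zero.mp hcomb with hba | hs0
  · have ha : a = 0 := by simpa using congrArg Complex.im hba
    simpa [ha] using hs
  · exact hs0

lemma ker_mulVecLin_add_I_smul [Fintype n] {A B : Matrix n n ℂ}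
    (hA : A.IsHermitian) (hB : B.IsHermitian) {a b : ℝ}
    (hAA : A * A = (a : ℂ) • A) (hBB : B * B = (b : ℂ) • B) :
    LinearMap.ker (A + Complex.I • B).mulVecLin =
      LinearMap.ker A.mulVecLin ⊓ LinearMap.ker B.mulVecLin := by
  ext v
  simp only [LinearMap.mem_ker, Submodule.mem_inf, mulVecLin_apply, add_mulVec, smul_mulVec]
  constructor
  · intro h
    have hBv : B *ᵥ v = Complex.I • A *ᵥ v := by
      refine smul_right_injective _ Complex.I_ne_zero ?_
      dsimp only
      rw [smul_smul, Complex.I_mul_I, neg_one_smul]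
      exact eq_neg_of_add_eq_zero_right h
    have hAu : A *ᵥ A *ᵥ v = (a : ℂ) • A *ᵥ v := by rw [mulVec_mulVec, hAA, smul_mulVec]
    have hBu : B *ᵥ A *ᵥ v = (b : ℂ) • A *ᵥ v := by
      have hBBv : B *ᵥ B *ᵥ v = (b : ℂ) • B *ᵥ v := by
        rw [mulVec_mulVec, hBB, smul_mulVec]
      rw [hBv, mulVec_smul, smul_comm] at hBBv
      exact smul_right_injective _ Complex.I_ne_zero hBBv
    have hu := eq_zero_of_mulVec_eq_of_mulVec_eq_I_smul hA hB hAu hBu rfl hBv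
    exact ⟨hu, by rw [hBv, hu, smul_zero]⟩
  · rintro ⟨hAv, hBv⟩
    rw [hAv, hBv, smul_zero, add_zero]

end Matrix

theorem stmt_18_general (n : ℕ) (α α' β β' : ℝ)
    (P Q : Matrix (Fin n) (Fin n) ℂ)
    (hP : P.IsHermitian) (hQ : Q.IsHermitian)
    (hPs : (P - (α : ℂ) • 1) * (P - (α' : ℂ) • 1) = 0)
    (hQs : (Q - (β : ℂ) • 1) * (Q - (β' : ℂ) • 1) = 0) :
    LinearMap.ker ((P + Complex.I • Q)
        - ((α : ℂ) + Complex.I * (β : ℂ)) • (1 : Matrix (Fin n) (Fin n) ℂ)).mulVecLin =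
      LinearMap.ker (P - (α : ℂ) • (1 : Matrix (Fin n) (Fin n) ℂ)).mulVecLin ⊓
        LinearMap.ker (Q - (β : ℂ) • (1 : Matrix (Fin n) (Fin n) ℂ)).mulVecLin := by
  have hX : (P + Complex.I • Q) - ((α : ℂ) + Complex.I * (β : ℂ)) • 1 =
      (P - (α : ℂ) • 1) + Complex.I • (Q - (β : ℂ) • 1) := by
    module
  have hPP := sub_smul_one_mul_self_of_mul_eq_zero hPs
  have hQQ := sub_smul_one_mul_self_of_mul_eq_zero hQs
  rw [← Complex.ofReal_sub] at hPP hQQ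
  rw [hX]
  exact ker_mulVecLin_add_I_smul (hP.sub_ofReal_smul_one α) (hQ.sub_ofReal_smul_one β) hPP hQQ

/-- If `(α, β) ≠ (α', β')`, then the eigenspace of `X = P + iQ` at `α + iβ` equals the
intersection of the `α`-eigenspace of `P` and the `β`-eigenspace of `Q`. -/
theorem stmt_18 (n : ℕ) (hn : 1 ≤ n) (α α' β β' : ℝ)
    (hne : (α, β) ≠ (α', β'))
    (P Q : Matrix (Fin n) (Fin n) ℂ)
    (hP : P.IsHermitian) (hQ : Q.IsHermitian)
    (hPs : (P - (α : ℂ) • 1) * (P - (α' : ℂ) • 1) = 0)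
    (hQs : (Q - (β : ℂ) • 1) * (Q - (β' : ℂ) • 1) = 0) :
    LinearMap.ker ((P + Complex.I • Q)
        - ((α : ℂ) + Complex.I * (β : ℂ)) • (1 : Matrix (Fin n) (Fin n) ℂ)).mulVecLin =
      LinearMap.ker (P - (α : ℂ) • (1 : Matrix (Fin n) (Fin n) ℂ)).mulVecLin ⊓
        LinearMap.ker (Q - (β : ℂ) • (1 : Matrix (Fin n) (Fin n) ℂ)).mulVecLin :=
  stmt_18_general n α α' β β' P Q hP hQ hPs hQs
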